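/- arXiv:2210.06387 — 2 statements merged into one kernel-verified Lean document; each statement's English description precedes it below -/
import Mathlib

section
/- Let n = 3, ν₁,ν₂,ν₃ > 0, K a strictly concave strictly monotone kernel function, J an upper semicontinuous 3-field function, and x, y regular node systems with x₁ < y₁ < y₂ < x₂ < x₃ < y₃. Then either m₁(y) < m₁(x) or m₃(y) < m₃(x), and either m₀(x) < m₀(y) or m₂(x) < m₂(y); in particular intertwining of maxima holds. -/
open Set

noncomputable section

/-- A kernel function: `[-1,1] → ℝ ∪ {-∞}`, real-valued and concave on `(-1,0)` and on `(0,1)`,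
extended continuously (in `EReal`) to the closed subintervals, so that the endpoint values
(in particular `K 0`) are the one-sided limits. -/
def KernelFun (K : ℝ → EReal) : Prop :=
  (∀ t, K t ≠ ⊤) ∧
  (∀ t ∈ Ioo (-1:ℝ) 0 ∪ Ioo (0:ℝ) 1, K t ≠ ⊥) ∧
  ConcaveOn ℝ (Ioo (-1:ℝ) 0) (fun t => (K t).toReal) ∧
  ConcaveOn ℝ (Ioo (0:ℝ) 1) (fun t => (K t).toReal) ∧
  ContinuousOn K (Icc (-1:ℝ) 0) ∧
  ContinuousOn K (Icc (0:ℝ) 1)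

/-- Monotonicity condition (M): nonincreasing on `(-1,0)`, nondecreasing on `(0,1)`. -/
def KMonotone (K : ℝ → EReal) : Prop :=
  AntitoneOn K (Ioo (-1:ℝ) 0) ∧ MonotoneOn K (Ioo (0:ℝ) 1)

/-- Strict monotonicity (SM): strictly decreasing on `[-1,0)`, strictly increasing on `(0,1]`. -/
def KStrictMonotone (K : ℝ → EReal) : Prop :=
  StrictAntiOn K (Ico (-1:ℝ) 0) ∧ StrictMonoOn K (Ioc (0:ℝ) 1)

/-- Strict concavity on both `(-1,0)` and `(0,1)`. -/
def KStrictConcave (K : ℝ → EReal) : Prop :=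
  StrictConcaveOn ℝ (Ioo (-1:ℝ) 0) (fun t => (K t).toReal) ∧
  StrictConcaveOn ℝ (Ioo (0:ℝ) 1) (fun t => (K t).toReal)

/-- An `n`-field function: bounded above on `[0,1]`, never `+∞`, and finite at more than `n`
points of `[0,1]`, counting the endpoints `0`, `1` with weight `1/2` only. -/
def NFieldFun (n : ℕ) (J : ℝ → EReal) : Prop :=
  (∀ t, J t ≠ ⊤) ∧
  (∃ M : ℝ, ∀ t ∈ Icc (0:ℝ) 1, J t ≤ (M : EReal)) ∧
  ((∃ S : Finset ℝ, ↑S ⊆ {t ∈ Ioo (0:ℝ) 1 | J t ≠ ⊥} ∧ n + 1 ≤ S.card) ∨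
   ((∃ S : Finset ℝ, ↑S ⊆ {t ∈ Ioo (0:ℝ) 1 | J t ≠ ⊥} ∧ n ≤ S.card) ∧
     (J 0 ≠ ⊥ ∨ J 1 ≠ ⊥)))

/-- The closed simplex: `0 ≤ x₁ ≤ ⋯ ≤ xₙ ≤ 1`. -/
def closedSimplex (n : ℕ) (x : Fin n → ℝ) : Prop :=
  (∀ i, x i ∈ Icc (0:ℝ) 1) ∧ Monotone x

/-- The open simplex: `0 < x₁ < ⋯ < xₙ < 1`. -/
def openSimplex (n : ℕ) (x : Fin n → ℝ) : Prop :=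
  (∀ i, x i ∈ Ioo (0:ℝ) 1) ∧ StrictMono x

/-- Extended node system: `x₀ = 0`, `x₁,…,xₙ`, `x_{n+1} = 1`. -/
def extNodes (n : ℕ) (x : Fin n → ℝ) : Fin (n + 2) → ℝ :=
  Fin.cons 0 (Fin.snoc x 1)

/-- The (weighted) sum of translates function `F(x,t) = J(t) + ∑ νⱼ K(t - xⱼ)`. -/
def sumTrans (n : ℕ) (ν : Fin n → ℝ) (K J : ℝ → EReal) (x : Fin n → ℝ) (t : ℝ) : EReal :=
  J t + ∑ i, (ν i : EReal) * K (t - x i)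

/-- The `j`-th interval maximum `mⱼ(x) = sup_{[xⱼ, xⱼ₊₁]} F(x,·)`. -/
def intMax (n : ℕ) (ν : Fin n → ℝ) (K J : ℝ → EReal) (x : Fin n → ℝ) (j : Fin (n + 1)) :
    EReal :=
  sSup (sumTrans n ν K J x '' Icc (extNodes n x j.castSucc) (extNodes n x j.succ))

/-- A node system is regular (nonsingular) if all interval maxima are finite. -/
def regularNodes (n : ℕ) (ν : Fin n → ℝ) (K J : ℝ → EReal) (x : Fin n → ℝ) : Prop :=
  ∀ j, intMax n ν K J x j ≠ ⊥

/-! If `m₁(x) ≤ m₁(y)`, take a maximum point `t` of `F(y,·)` on `[y₁,y₂] ⊆ [x₁,x₂]`. Then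
`F(x,t) ≤ F(y,t)`, the field `J(t)` cancels, and among the three kernel terms the first favours `x`
strictly and the second weakly (monotonicity of `K`), so
`ν₂ (K(t-x₂) - K(t-y₂)) < ν₃ (K(t-y₃) - K(t-x₃))`. Concavity of `K` on the left branch compares
these two increments with the displacements and gives `ν₂ (x₂ - y₂) < ν₃ (y₃ - x₃)`. A maximum
point of `F(y,·)` on `[y₃,1]` gives the reverse inequality when `m₃(x) ≤ m₃(y)`, using the right
branch. The second alternative is the same argument for maximum points of `F(x,·)` on `[0,x₁]` and
`[x₂,x₃]`, comparing `ν₁ (y₁ - x₁)` with `ν₂ (x₂ - y₂)`.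
-/

open Filter Topology

/- At a comparison point, `Q` and `P` are the kernel increments of two terms, `d` the contribution
of the third, and `P * w ≤ Q * w'` the concavity estimate against the node displacements `w`, `w'`. -/
theorem lt_of_add_le_of_slope_le {a b d P Q w w' : ℝ} (hd : 0 < d) (hQ : 0 ≤ Q) (hb : 0 ≤ b)
    (hw : 0 < w) (h : a * Q + d ≤ b * P) (hslope : P * w ≤ Q * w') : a * w < b * w' := by
  have hQpos : 0 < Q := by
    rcases hQ.eq_or_lt with rfl | hQ
    · nlinarith
    · exact hQ
  nlinarith [mul_le_mul_of_nonneg_left hslope hb]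

theorem le_of_add_le_of_slope_le {a b d P Q w w' : ℝ} (hd : 0 ≤ d) (hQ : 0 < Q) (hb : 0 ≤ b)
    (hw : 0 ≤ w) (h : a * Q + d ≤ b * P) (hslope : P * w ≤ Q * w') : a * w ≤ b * w' := by
  nlinarith [mul_le_mul_of_nonneg_left hslope hb]

theorem ConcaveOn.secant_anti {s : Set ℝ} {f : ℝ → ℝ} (hf : ConcaveOn ℝ s f) {α β γ δ : ℝ}
    (hα : α ∈ s) (hβ : β ∈ s) (hγ : γ ∈ s) (hδ : δ ∈ s)
    (hαβ : α < β) (hβγ : β ≤ γ) (hγδ : γ < δ) :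
    (f δ - f γ) * (β - α) ≤ (f β - f α) * (δ - γ) := by
  have hslope : (f δ - f γ) / (δ - γ) ≤ (f β - f α) / (β - α) := by
    rcases hβγ.eq_or_lt with rfl | hβγ
    · exact hf.slope_anti_adjacent hα hδ hαβ hγδ
    · exact (hf.slope_anti_adjacent hβ hδ hβγ hγδ).trans
        (hf.slope_anti_adjacent hα hγ hαβ hβγ)
  rwa [div_le_div_iff₀ (by linarith) (by linarith)] at hslope

theorem ConcaveOn.concaveOn_Ioc {f : ℝ → ℝ} {a b : ℝ} (hf : ConcaveOn ℝ (Ioo a b) f)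
    (hb : ContinuousWithinAt f (Ioo a b) b) : ConcaveOn ℝ (Ioc a b) f := by
  refine concaveOn_of_slope_anti_adjacent (convex_Ioc a b) fun {x y z} hx hz hxy hyz => ?_
  rcases hz.2.lt_or_eq with hzb | rfl
  · exact hf.slope_anti_adjacent ⟨hx.1, by linarith⟩ ⟨by linarith [hx.1], hzb⟩ hxy hyz
  · have hlim : Tendsto (fun u => (f u - f y) / (u - y)) (𝓝[Ioo y z] z)
        (𝓝 ((f z - f y) / (z - y))) :=
      ((hb.mono (Ioo_subset_Ioo_left (hx.1.trans hxy).le)).sub tendsto_const_nhds).div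
        ((tendsto_nhdsWithin_of_tendsto_nhds tendsto_id).sub tendsto_const_nhds)
        (sub_pos.2 hyz).ne'
    have := right_nhdsWithin_Ioo_neBot hyz
    refine le_of_tendsto hlim (eventually_nhdsWithin_of_forall fun u hu => ?_)
    exact hf.slope_anti_adjacent ⟨hx.1, by linarith [hu.1]⟩ ⟨by linarith [hx.1, hu.1], hu.2⟩
      hxy hu.1

theorem ConcaveOn.concaveOn_Ico {f : ℝ → ℝ} {a b : ℝ} (hf : ConcaveOn ℝ (Ioo a b) f)
    (ha : ContinuousWithinAt f (Ioo a b) a) : ConcaveOn ℝ (Ico a b) f := by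
  refine concaveOn_of_slope_anti_adjacent (convex_Ico a b) fun {x y z} hx hz hxy hyz => ?_
  rcases hx.1.lt_or_eq with hax | rfl
  · exact hf.slope_anti_adjacent ⟨hax, by linarith [hz.2]⟩ ⟨by linarith, hz.2⟩ hxy hyz
  · have hlim : Tendsto (fun u => (f y - f u) / (y - u)) (𝓝[Ioo a y] a)
        (𝓝 ((f y - f a) / (y - a))) :=
      (tendsto_const_nhds.sub (ha.mono (Ioo_subset_Ioo_right (hyz.trans hz.2).le))).div
        (tendsto_const_nhds.sub (tendsto_nhdsWithin_of_tendsto_nhds tendsto_id))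
        (sub_pos.2 hxy).ne'
    have := left_nhdsWithin_Ioo_neBot hxy
    refine ge_of_tendsto hlim (eventually_nhdsWithin_of_forall fun u hu => ?_)
    exact hf.slope_anti_adjacent ⟨hu.1, by linarith [hu.2, hz.2]⟩ ⟨by linarith [hu.1], hz.2⟩
      hu.2 hyz

theorem StrictAntiOn.Icc_of_continuousWithinAt {β : Type*} [LinearOrder β] [TopologicalSpace β]
    [OrderClosedTopology β] {f : ℝ → β} {a b : ℝ}
    (hf : StrictAntiOn f (Ico a b)) (hb : ContinuousWithinAt f (Icc a b) b) :
    StrictAntiOn f (Icc a b) := by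
  intro u hu v hv huv
  rcases hv.2.lt_or_eq with hvb | rfl
  · exact hf ⟨hu.1, huv.trans hvb⟩ ⟨hv.1, hvb⟩ huv
  · have hlim : Tendsto f (𝓝[Ioo ((u + v) / 2) v] v) (𝓝 (f v)) :=
      hb.mono fun w hw => ⟨by linarith [hu.1, hw.1], hw.2.le⟩
    have := right_nhdsWithin_Ioo_neBot (show (u + v) / 2 < v by linarith)
    have hle : f v ≤ f ((u + v) / 2) :=
      le_of_tendsto hlim (eventually_nhdsWithin_of_forall fun w hw =>
        (hf ⟨by linarith [hu.1], by linarith⟩ ⟨by linarith [hu.1, hw.1], hw.2⟩ hw.1).le)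
    exact hle.trans_lt (hf ⟨hu.1, huv⟩ ⟨by linarith [hu.1], by linarith⟩ (by linarith))

theorem StrictMonoOn.Icc_of_continuousWithinAt {β : Type*} [LinearOrder β] [TopologicalSpace β]
    [OrderClosedTopology β] {f : ℝ → β} {a b : ℝ}
    (hf : StrictMonoOn f (Ioc a b)) (ha : ContinuousWithinAt f (Icc a b) a) :
    StrictMonoOn f (Icc a b) := by
  intro u hu v hv huv
  rcases hu.1.lt_or_eq with hau | rfl
  · exact hf ⟨hau, huv.le.trans hv.2⟩ ⟨hau.trans huv, hv.2⟩ huv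
  · have hlim : Tendsto f (𝓝[Ioo a ((a + v) / 2)] a) (𝓝 (f a)) :=
      ha.mono fun w hw => ⟨hw.1.le, by linarith [hv.2, hw.2]⟩
    have := left_nhdsWithin_Ioo_neBot (show a < (a + v) / 2 by linarith)
    have hle : f a ≤ f ((a + v) / 2) :=
      le_of_tendsto hlim (eventually_nhdsWithin_of_forall fun w hw =>
        (hf ⟨hw.1, by linarith [hv.2, hw.2]⟩ ⟨by linarith, by linarith [hv.2]⟩ hw.2).le)
    exact hle.trans_lt (hf ⟨by linarith, by linarith [hv.2]⟩ ⟨by linarith, hv.2⟩ (by linarith))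

theorem Fin.forall_fin_three {P : Fin 3 → Prop} : (∀ i, P i) ↔ P 0 ∧ P 1 ∧ P 2 :=
  ⟨fun h => ⟨h 0, h 1, h 2⟩, fun ⟨h₀, h₁, h₂⟩ i => by fin_cases i <;> assumption⟩

theorem EReal.sum_ne_top {ι : Type*} {s : Finset ι} {f : ι → EReal} (h : ∀ i ∈ s, f i ≠ ⊤) :
    ∑ i ∈ s, f i ≠ ⊤ := by
  classical
  induction s using Finset.induction_on with
  | empty => simp
  | insert i s hi ih =>
    rw [Finset.sum_insert hi]
    exact (EReal.add_lt_top (h i (s.mem_insert_self i))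
      (ih fun j hj => h j (Finset.mem_insert_of_mem hj))).ne

theorem EReal.sum_ne_bot_iff {ι : Type*} {s : Finset ι} {f : ι → EReal} :
    ∑ i ∈ s, f i ≠ ⊥ ↔ ∀ i ∈ s, f i ≠ ⊥ := by
  classical
  induction s using Finset.induction_on with
  | empty => simp
  | insert i s hi ih => simp [Finset.sum_insert hi, ih]

theorem EReal.coe_finset_sum {ι : Type*} (s : Finset ι) (f : ι → ℝ) :
    ((∑ i ∈ s, f i : ℝ) : EReal) = ∑ i ∈ s, (f i : EReal) :=
  map_sum (⟨⟨((↑) : ℝ → EReal), EReal.coe_zero⟩, EReal.coe_add⟩ : ℝ →+ EReal) f s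

theorem EReal.upperSemicontinuousWithinAt_sum {ι α : Type*} [TopologicalSpace α]
    {f : ι → α → EReal} {s : Set α} {x : α} (u : Finset ι)
    (hf : ∀ i ∈ u, UpperSemicontinuousWithinAt (f i) s x) (htop : ∀ i ∈ u, f i x ≠ ⊤) :
    UpperSemicontinuousWithinAt (fun z => ∑ i ∈ u, f i z) s x := by
  classical
  induction u using Finset.induction_on with
  | empty => simpa using upperSemicontinuousWithinAt_const
  | insert i u hi ih =>
    have hitop := htop i (u.mem_insert_self i)
    have hutop := EReal.sum_ne_top fun j hj => htop j (Finset.mem_insert_of_mem hj)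
    simp only [Finset.sum_insert hi]
    exact (hf i (u.mem_insert_self i)).add' (ih (fun j hj => hf j (Finset.mem_insert_of_mem hj))
      (fun j hj => htop j (Finset.mem_insert_of_mem hj)))
      (EReal.continuousAt_add (Or.inl hitop) (Or.inr hutop))

theorem exists_le_of_sSup_image_le {α β : Type*} [TopologicalSpace α] [CompleteLinearOrder β]
    {f g : α → β} {s t : Set α} (hs : IsCompact s) (hne : s.Nonempty)
    (hg : UpperSemicontinuousOn g s) (hst : s ⊆ t) (h : sSup (f '' t) ≤ sSup (g '' s)) :
    ∃ u ∈ s, f u ≤ g u ∧ sSup (g '' s) ≤ g u := by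
  obtain ⟨u, hu, hmax⟩ := hg.exists_isMaxOn hne hs
  have hsup : sSup (g '' s) ≤ g u := sSup_le (by rintro _ ⟨v, hv, rfl⟩; exact hmax hv)
  exact ⟨u, hu, (le_sSup (mem_image_of_mem f (hst hu))).trans (h.trans hsup), hsup⟩

section Kernel

variable {K : ℝ → EReal}

theorem KernelFun.strictAntiOn_Icc (hK : KernelFun K) (hSM : KStrictMonotone K) :
    StrictAntiOn K (Icc (-1) 0) :=
  hSM.1.Icc_of_continuousWithinAt (hK.2.2.2.2.1 0 ⟨by norm_num, le_rfl⟩)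

theorem KernelFun.strictMonoOn_Icc (hK : KernelFun K) (hSM : KStrictMonotone K) :
    StrictMonoOn K (Icc 0 1) :=
  hSM.2.Icc_of_continuousWithinAt (hK.2.2.2.2.2 0 ⟨le_rfl, by norm_num⟩)

theorem KernelFun.ne_bot_of_neg (hK : KernelFun K) (hSM : KStrictMonotone K) {s : ℝ}
    (hs : -1 ≤ s) (hs0 : s < 0) : K s ≠ ⊥ :=
  ne_bot_of_gt (hK.strictAntiOn_Icc hSM ⟨hs, hs0.le⟩ ⟨by norm_num, le_rfl⟩ hs0)

theorem KernelFun.ne_bot_of_pos (hK : KernelFun K) (hSM : KStrictMonotone K) {s : ℝ}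
    (hs0 : 0 < s) (hs : s ≤ 1) : K s ≠ ⊥ :=
  ne_bot_of_gt (hK.strictMonoOn_Icc hSM ⟨le_rfl, by norm_num⟩ ⟨hs0.le, hs⟩ hs0)

theorem KernelFun.toReal_lt_of_nonpos (hK : KernelFun K) (hSM : KStrictMonotone K) {s s' : ℝ}
    (hs : -1 ≤ s) (hss' : s < s') (hs' : s' ≤ 0) (hbot : K s' ≠ ⊥) :
    (K s').toReal < (K s).toReal := by
  have hlt := hK.strictAntiOn_Icc hSM ⟨hs, hss'.le.trans hs'⟩ ⟨hs.trans hss'.le, hs'⟩ hss'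
  rw [← EReal.coe_lt_coe_iff, EReal.coe_toReal (hK.1 _) hbot,
    EReal.coe_toReal (hK.1 _) (ne_bot_of_gt hlt)]
  exact hlt

theorem KernelFun.toReal_lt_of_nonneg (hK : KernelFun K) (hSM : KStrictMonotone K) {s s' : ℝ}
    (hs : 0 ≤ s) (hss' : s < s') (hs' : s' ≤ 1) (hbot : K s ≠ ⊥) :
    (K s).toReal < (K s').toReal := by
  have hlt := hK.strictMonoOn_Icc hSM ⟨hs, hss'.le.trans hs'⟩ ⟨hs.trans hss'.le, hs'⟩ hss'
  rw [← EReal.coe_lt_coe_iff, EReal.coe_toReal (hK.1 _) hbot,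
    EReal.coe_toReal (hK.1 _) (ne_bot_of_gt hlt)]
  exact hlt

theorem KernelFun.concaveOn_Ioc (hK : KernelFun K) {δ : ℝ} (hδ : δ ≤ 0) (hbot : K δ ≠ ⊥) :
    ConcaveOn ℝ (Ioc (-1) δ) fun s => (K s).toReal := by
  rcases hδ.lt_or_eq with hδ | rfl
  · exact hK.2.2.1.subset (Ioc_subset_Ioo_right hδ) (convex_Ioc _ _)
  · refine hK.2.2.1.concaveOn_Ioc ((EReal.tendsto_toReal (hK.1 0) hbot).comp ?_)
    exact (hK.2.2.2.2.1 0 ⟨by norm_num, le_rfl⟩).mono Ioo_subset_Icc_self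

theorem KernelFun.concaveOn_Ico (hK : KernelFun K) {α : ℝ} (hα : 0 ≤ α) (hbot : K α ≠ ⊥) :
    ConcaveOn ℝ (Ico α 1) fun s => (K s).toReal := by
  rcases hα.lt_or_eq with hα | rfl
  · exact hK.2.2.2.1.subset (Ico_subset_Ioo_left hα) (convex_Ico _ _)
  · refine hK.2.2.2.1.concaveOn_Ico ((EReal.tendsto_toReal (hK.1 0) hbot).comp ?_)
    exact (hK.2.2.2.2.2 0 ⟨le_rfl, by norm_num⟩).mono Ioo_subset_Icc_self

theorem KernelFun.continuousOn_sub (hK : KernelFun K) {p q z : ℝ} (hp : 0 ≤ p) (hq : q ≤ 1)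
    (hz : z ∈ Icc (0 : ℝ) 1) (hzpq : z ∉ Ioo p q) :
    ContinuousOn (fun t => K (t - z)) (Icc p q) := by
  have hsub : ContinuousOn (fun t : ℝ => t - z) (Icc p q) := by fun_prop
  rcases le_or_gt z p with hzp | hpz
  · exact hK.2.2.2.2.2.comp hsub fun t ht => ⟨by linarith [ht.1], by linarith [ht.2, hz.1]⟩
  · have hqz : q ≤ z := not_lt.1 fun hzq => hzpq ⟨hpz, hzq⟩
    exact hK.2.2.2.2.1.comp hsub fun t ht => ⟨by linarith [ht.1, hz.2], by linarith [ht.2]⟩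

end Kernel

section SumTrans

variable {n : ℕ} {ν : Fin n → ℝ} {K J : ℝ → EReal} {t : ℝ}

theorem sumTrans_ne_bot_iff {x : Fin n → ℝ} (hν : ∀ i, 0 < ν i) :
    sumTrans n ν K J x t ≠ ⊥ ↔ J t ≠ ⊥ ∧ ∀ i, K (t - x i) ≠ ⊥ := by
  have hterm : ∀ i, (ν i : EReal) * K (t - x i) ≠ ⊥ ↔ K (t - x i) ≠ ⊥ := fun i => by
    simp [EReal.mul_eq_bot, hν i, (hν i).not_gt]
  simp only [sumTrans, EReal.add_ne_bot_iff, EReal.sum_ne_bot_iff, Finset.mem_univ, true_imp_iff,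
    hterm]

theorem sumTrans_eq_coe {x : Fin n → ℝ} (hKtop : ∀ s, K s ≠ ⊤) (hJtop : J t ≠ ⊤)
    (hJ : J t ≠ ⊥) (hK : ∀ i, K (t - x i) ≠ ⊥) :
    sumTrans n ν K J x t = ↑((J t).toReal + ∑ i, ν i * (K (t - x i)).toReal) := by
  simp only [sumTrans, EReal.coe_add, EReal.coe_finset_sum, EReal.coe_mul,
    EReal.coe_toReal hJtop hJ, EReal.coe_toReal (hKtop _) (hK _)]

theorem sum_toReal_le_of_sumTrans_le {x y : Fin n → ℝ} (hν : ∀ i, 0 < ν i)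
    (hKtop : ∀ s, K s ≠ ⊤) (hJtop : J t ≠ ⊤) (hx : ∀ i, K (t - x i) ≠ ⊥)
    (hy : sumTrans n ν K J y t ≠ ⊥) (hle : sumTrans n ν K J x t ≤ sumTrans n ν K J y t) :
    ∑ i, ν i * (K (t - x i)).toReal ≤ ∑ i, ν i * (K (t - y i)).toReal := by
  obtain ⟨hJ, hy⟩ := (sumTrans_ne_bot_iff hν).1 hy
  rw [sumTrans_eq_coe hKtop hJtop hJ hx, sumTrans_eq_coe hKtop hJtop hJ hy,
    EReal.coe_le_coe_iff] at hle
  linarith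

theorem KernelFun.exists_sumTrans_le_of_sSup_le (hK : KernelFun K) (hν : ∀ i, 0 < ν i)
    (hJtop : ∀ t, J t ≠ ⊤) (hJ : UpperSemicontinuousOn J (Icc 0 1)) {x y : Fin n → ℝ}
    {p q p' q' : ℝ} (hp : 0 ≤ p) (hpq : p ≤ q) (hq : q ≤ 1) (hy : ∀ i, y i ∈ Icc (0 : ℝ) 1)
    (hypq : ∀ i, y i ∉ Ioo p q) (hsub : Icc p q ⊆ Icc p' q')
    (hle : sSup (sumTrans n ν K J x '' Icc p' q') ≤ sSup (sumTrans n ν K J y '' Icc p q))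
    (hfin : sSup (sumTrans n ν K J y '' Icc p q) ≠ ⊥) :
    ∃ t ∈ Icc p q, sumTrans n ν K J x t ≤ sumTrans n ν K J y t ∧ sumTrans n ν K J y t ≠ ⊥ := by
  have hterm : ∀ i, ContinuousOn (fun t => K (t - y i)) (Icc p q) := fun i =>
    hK.continuousOn_sub hp hq (hy i) (hypq i)
  have husc : UpperSemicontinuousOn (sumTrans n ν K J y) (Icc p q) := by
    intro t ht
    have htop : ∀ i ∈ Finset.univ, (ν i : EReal) * K (t - y i) ≠ ⊤ := fun i _ => by
      simp [EReal.mul_eq_top, hK.1, (hν i).not_gt]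
    refine UpperSemicontinuousWithinAt.add' (hJ.mono (Icc_subset_Icc hp hq) t ht)
      (EReal.upperSemicontinuousWithinAt_sum _ (fun i _ => ?_) htop)
      (EReal.continuousAt_add (Or.inl (hJtop t)) (Or.inr (EReal.sum_ne_top htop)))
    exact ContinuousWithinAt.upperSemicontinuousWithinAt <| EReal.Tendsto.const_mul
      (hterm i t ht) (Or.inl (EReal.coe_ne_bot _)) (Or.inl (EReal.coe_ne_top _))
  obtain ⟨t, ht, hxy, hmax⟩ :=
    exists_le_of_sSup_image_le isCompact_Icc (nonempty_Icc.2 hpq) husc hsub hle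
  exact ⟨t, ht, hxy, ne_bot_of_le_ne_bot hfin hmax⟩

end SumTrans

/-- Case 1 of the paper, `x₁ < y₁ < y₂ < x₂ < x₃ < y₃`, with the nodes indexed from `0`. -/
def CaseOne (x y : Fin 3 → ℝ) : Prop :=
  0 ≤ x 0 ∧ x 0 < y 0 ∧ y 0 < y 1 ∧ y 1 < x 1 ∧ x 1 < x 2 ∧ x 2 < y 2 ∧ y 2 ≤ 1

namespace CaseOne

variable {K J : ℝ → EReal} {ν x y : Fin 3 → ℝ}

theorem mem_Icc_left (hxy : CaseOne x y) : ∀ i, x i ∈ Icc (0 : ℝ) 1 := by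
  obtain ⟨h0, h1, h2, h3, h4, h5, h6⟩ := hxy
  exact Fin.forall_fin_three.2
    ⟨⟨h0, by linarith⟩, ⟨by linarith, by linarith⟩, ⟨by linarith, by linarith⟩⟩

theorem mem_Icc_right (hxy : CaseOne x y) : ∀ i, y i ∈ Icc (0 : ℝ) 1 := by
  obtain ⟨h0, h1, h2, h3, h4, h5, h6⟩ := hxy
  exact Fin.forall_fin_three.2
    ⟨⟨by linarith, by linarith⟩, ⟨by linarith, by linarith⟩, ⟨by linarith, h6⟩⟩

theorem lt_of_intMax_one_le (hxy : CaseOne x y) (hK : KernelFun K) (hSM : KStrictMonotone K)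
    (hν : ∀ i, 0 < ν i) (hJtop : ∀ t, J t ≠ ⊤) (hJ : UpperSemicontinuousOn J (Icc 0 1))
    (hy : regularNodes 3 ν K J y) (hle : intMax 3 ν K J x 1 ≤ intMax 3 ν K J y 1) :
    ν 1 * (x 1 - y 1) < ν 2 * (y 2 - x 2) := by
  have ⟨h0, h1, h2, h3, h4, h5, h6⟩ := hxy
  obtain ⟨t, ⟨ht₀, ht₁⟩, hFle, hFfin⟩ := hK.exists_sumTrans_le_of_sSup_le hν hJtop hJ
    (by linarith) h2.le (by linarith) hxy.mem_Icc_right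
    (Fin.forall_fin_three.2 ⟨fun h => by linarith [h.1], fun h => by linarith [h.2],
      fun h => by linarith [h.2]⟩)
    (Icc_subset_Icc h1.le h3.le) hle (hy 1)
  have hyfin := ((sumTrans_ne_bot_iff hν).1 hFfin).2
  have hxfin : ∀ i, K (t - x i) ≠ ⊥ := Fin.forall_fin_three.2
    ⟨hK.ne_bot_of_pos hSM (by linarith) (by linarith),
      hK.ne_bot_of_neg hSM (by linarith) (by linarith),
      hK.ne_bot_of_neg hSM (by linarith) (by linarith)⟩
  have hsum := sum_toReal_le_of_sumTrans_le hν hK.1 (hJtop t) hxfin hFfin hFle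
  simp only [Fin.sum_univ_three] at hsum
  have hgain := hK.toReal_lt_of_nonneg hSM (s := t - y 0) (s' := t - x 0) (by linarith)
    (by linarith) (by linarith) (hyfin 0)
  have hmono := hK.toReal_lt_of_nonpos hSM (s := t - x 1) (s' := t - y 1) (by linarith)
    (by linarith) (by linarith) (hyfin 1)
  have hslope := (hK.concaveOn_Ioc (δ := t - y 1) (by linarith) (hyfin 1)).secant_anti
    (α := t - y 2) (β := t - x 2) (γ := t - x 1) ⟨by linarith, by linarith⟩
    ⟨by linarith, by linarith⟩ ⟨by linarith, by linarith⟩ ⟨by linarith, le_rfl⟩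
    (by linarith) (by linarith) (by linarith)
  exact lt_of_add_le_of_slope_le (P := (K (t - y 2)).toReal - (K (t - x 2)).toReal)
    (mul_pos (hν 0) (sub_pos.2 hgain)) (sub_nonneg.2 hmono.le) (hν 2).le (by linarith)
    (by linarith) (by linarith)

theorem lt_of_intMax_three_le (hxy : CaseOne x y) (hK : KernelFun K) (hSM : KStrictMonotone K)
    (hν : ∀ i, 0 < ν i) (hJtop : ∀ t, J t ≠ ⊤) (hJ : UpperSemicontinuousOn J (Icc 0 1))
    (hy : regularNodes 3 ν K J y) (hle : intMax 3 ν K J x 3 ≤ intMax 3 ν K J y 3) :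
    ν 2 * (y 2 - x 2) < ν 1 * (x 1 - y 1) := by
  have ⟨h0, h1, h2, h3, h4, h5, h6⟩ := hxy
  obtain ⟨t, ⟨ht₀, ht₁⟩, hFle, hFfin⟩ := hK.exists_sumTrans_le_of_sSup_le hν hJtop hJ
    (by linarith) h6 le_rfl hxy.mem_Icc_right
    (Fin.forall_fin_three.2 ⟨fun h => by linarith [h.1], fun h => by linarith [h.1],
      fun h => by linarith [h.1]⟩)
    (Icc_subset_Icc h5.le le_rfl) hle (hy 3)
  have hyfin := ((sumTrans_ne_bot_iff hν).1 hFfin).2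
  have hxfin : ∀ i, K (t - x i) ≠ ⊥ := Fin.forall_fin_three.2
    ⟨hK.ne_bot_of_pos hSM (by linarith) (by linarith),
      hK.ne_bot_of_pos hSM (by linarith) (by linarith),
      hK.ne_bot_of_pos hSM (by linarith) (by linarith)⟩
  have hsum := sum_toReal_le_of_sumTrans_le hν hK.1 (hJtop t) hxfin hFfin hFle
  simp only [Fin.sum_univ_three] at hsum
  have hgain := hK.toReal_lt_of_nonneg hSM (s := t - y 0) (s' := t - x 0) (by linarith)
    (by linarith) (by linarith) (hyfin 0)
  have hmono := hK.toReal_lt_of_nonneg hSM (s := t - y 2) (s' := t - x 2) (by linarith)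
    (by linarith) (by linarith) (hyfin 2)
  have hslope := (hK.concaveOn_Ico (α := t - y 2) (by linarith) (hyfin 2)).secant_anti
    (β := t - x 2) (γ := t - x 1) (δ := t - y 1) ⟨le_rfl, by linarith⟩
    ⟨by linarith, by linarith⟩ ⟨by linarith, by linarith⟩ ⟨by linarith, by linarith⟩
    (by linarith) (by linarith) (by linarith)
  exact lt_of_add_le_of_slope_le (P := (K (t - y 1)).toReal - (K (t - x 1)).toReal)
    (mul_pos (hν 0) (sub_pos.2 hgain)) (sub_nonneg.2 hmono.le) (hν 1).le (by linarith)
    (by linarith) (by linarith)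

theorem lt_of_intMax_zero_le (hxy : CaseOne x y) (hK : KernelFun K) (hSM : KStrictMonotone K)
    (hν : ∀ i, 0 < ν i) (hJtop : ∀ t, J t ≠ ⊤) (hJ : UpperSemicontinuousOn J (Icc 0 1))
    (hx : regularNodes 3 ν K J x) (hle : intMax 3 ν K J y 0 ≤ intMax 3 ν K J x 0) :
    ν 0 * (y 0 - x 0) < ν 1 * (x 1 - y 1) := by
  have ⟨h0, h1, h2, h3, h4, h5, h6⟩ := hxy
  obtain ⟨t, ⟨ht₀, ht₁⟩, hFle, hFfin⟩ := hK.exists_sumTrans_le_of_sSup_le hν hJtop hJ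
    le_rfl h0 (by linarith) hxy.mem_Icc_left
    (Fin.forall_fin_three.2 ⟨fun h => by linarith [h.2], fun h => by linarith [h.2],
      fun h => by linarith [h.2]⟩)
    (Icc_subset_Icc le_rfl h1.le) hle (hx 0)
  have hxfin := ((sumTrans_ne_bot_iff hν).1 hFfin).2
  have hyfin : ∀ i, K (t - y i) ≠ ⊥ := Fin.forall_fin_three.2
    ⟨hK.ne_bot_of_neg hSM (by linarith) (by linarith),
      hK.ne_bot_of_neg hSM (by linarith) (by linarith),
      hK.ne_bot_of_neg hSM (by linarith) (by linarith)⟩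
  have hsum := sum_toReal_le_of_sumTrans_le hν hK.1 (hJtop t) hyfin hFfin hFle
  simp only [Fin.sum_univ_three] at hsum
  have hgain := hK.toReal_lt_of_nonpos hSM (s := t - y 2) (s' := t - x 2) (by linarith)
    (by linarith) (by linarith) (hxfin 2)
  have hmono := hK.toReal_lt_of_nonpos hSM (s := t - y 0) (s' := t - x 0) (by linarith)
    (by linarith) (by linarith) (hxfin 0)
  have hslope := (hK.concaveOn_Ioc (δ := t - x 0) (by linarith) (hxfin 0)).secant_anti
    (α := t - x 1) (β := t - y 1) (γ := t - y 0) ⟨by linarith, by linarith⟩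
    ⟨by linarith, by linarith⟩ ⟨by linarith, by linarith⟩ ⟨by linarith, le_rfl⟩
    (by linarith) (by linarith) (by linarith)
  exact lt_of_add_le_of_slope_le (P := (K (t - x 1)).toReal - (K (t - y 1)).toReal)
    (mul_pos (hν 2) (sub_pos.2 hgain)) (sub_nonneg.2 hmono.le) (hν 1).le (by linarith)
    (by linarith) (by linarith)

theorem le_of_intMax_two_le (hxy : CaseOne x y) (hK : KernelFun K) (hSM : KStrictMonotone K)
    (hν : ∀ i, 0 < ν i) (hJtop : ∀ t, J t ≠ ⊤) (hJ : UpperSemicontinuousOn J (Icc 0 1))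
    (hx : regularNodes 3 ν K J x) (hle : intMax 3 ν K J y 2 ≤ intMax 3 ν K J x 2) :
    ν 1 * (x 1 - y 1) ≤ ν 0 * (y 0 - x 0) := by
  have ⟨h0, h1, h2, h3, h4, h5, h6⟩ := hxy
  obtain ⟨t, ⟨ht₀, ht₁⟩, hFle, hFfin⟩ := hK.exists_sumTrans_le_of_sSup_le hν hJtop hJ
    (by linarith) h4.le (by linarith) hxy.mem_Icc_left
    (Fin.forall_fin_three.2 ⟨fun h => by linarith [h.1], fun h => by linarith [h.1],
      fun h => by linarith [h.2]⟩)
    (Icc_subset_Icc h3.le h5.le) hle (hx 2)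
  have hxfin := ((sumTrans_ne_bot_iff hν).1 hFfin).2
  have hyfin : ∀ i, K (t - y i) ≠ ⊥ := Fin.forall_fin_three.2
    ⟨hK.ne_bot_of_pos hSM (by linarith) (by linarith),
      hK.ne_bot_of_pos hSM (by linarith) (by linarith),
      hK.ne_bot_of_neg hSM (by linarith) (by linarith)⟩
  have hsum := sum_toReal_le_of_sumTrans_le hν hK.1 (hJtop t) hyfin hFfin hFle
  simp only [Fin.sum_univ_three] at hsum
  have hmono := hK.toReal_lt_of_nonpos hSM (s := t - y 2) (s' := t - x 2) (by linarith)
    (by linarith) (by linarith) (hxfin 2)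
  have hgain := hK.toReal_lt_of_nonneg hSM (s := t - x 1) (s' := t - y 1) (by linarith)
    (by linarith) (by linarith) (hxfin 1)
  have hslope := (hK.concaveOn_Ico (α := t - x 1) (by linarith) (hxfin 1)).secant_anti
    (β := t - y 1) (γ := t - y 0) (δ := t - x 0) ⟨le_rfl, by linarith⟩
    ⟨by linarith, by linarith⟩ ⟨by linarith, by linarith⟩ ⟨by linarith, by linarith⟩
    (by linarith) (by linarith) (by linarith)
  exact le_of_add_le_of_slope_le (P := (K (t - x 0)).toReal - (K (t - y 0)).toReal)
    (mul_nonneg (hν 2).le (sub_nonneg.2 hmono.le)) (sub_pos.2 hgain) (hν 0).le (by linarith)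
    (by linarith) (by linarith)

end CaseOne

theorem three_nodes_case1_general (ν₁ ν₂ ν₃ : ℝ) (hν₁ : 0 < ν₁) (hν₂ : 0 < ν₂) (hν₃ : 0 < ν₃)
    (K J : ℝ → EReal) (hK : KernelFun K) (hSM : KStrictMonotone K)
    (hJ : NFieldFun 3 J) (hJusc : UpperSemicontinuousOn J (Icc (0:ℝ) 1))
    (x₁ x₂ x₃ y₁ y₂ y₃ : ℝ) (h0 : 0 ≤ x₁) (h1 : x₁ < y₁) (h2 : y₁ < y₂) (h3 : y₂ < x₂)
    (h4 : x₂ < x₃) (h5 : x₃ < y₃) (h6 : y₃ ≤ 1)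
    (hxr : regularNodes 3 ![ν₁, ν₂, ν₃] K J ![x₁, x₂, x₃])
    (hyr : regularNodes 3 ![ν₁, ν₂, ν₃] K J ![y₁, y₂, y₃]) :
    (intMax 3 ![ν₁, ν₂, ν₃] K J ![y₁, y₂, y₃] 1 < intMax 3 ![ν₁, ν₂, ν₃] K J ![x₁, x₂, x₃] 1 ∨
      intMax 3 ![ν₁, ν₂, ν₃] K J ![y₁, y₂, y₃] 3 < intMax 3 ![ν₁, ν₂, ν₃] K J ![x₁, x₂, x₃] 3) ∧
    (intMax 3 ![ν₁, ν₂, ν₃] K J ![x₁, x₂, x₃] 0 < intMax 3 ![ν₁, ν₂, ν₃] K J ![y₁, y₂, y₃] 0 ∨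
      intMax 3 ![ν₁, ν₂, ν₃] K J ![x₁, x₂, x₃] 2 < intMax 3 ![ν₁, ν₂, ν₃] K J ![y₁, y₂, y₃] 2) := by
  have hxy : CaseOne ![x₁, x₂, x₃] ![y₁, y₂, y₃] := ⟨h0, h1, h2, h3, h4, h5, h6⟩
  have hν : ∀ i, 0 < ![ν₁, ν₂, ν₃] i := Fin.forall_fin_three.2 ⟨hν₁, hν₂, hν₃⟩
  constructor
  · by_contra! h
    exact lt_asymm (hxy.lt_of_intMax_one_le hK hSM hν hJ.1 hJusc hyr h.1)
      (hxy.lt_of_intMax_three_le hK hSM hν hJ.1 hJusc hyr h.2)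
  · by_contra! h
    exact (hxy.le_of_intMax_two_le hK hSM hν hJ.1 hJusc hxr h.2).not_gt
      (hxy.lt_of_intMax_zero_le hK hSM hν hJ.1 hJusc hxr h.1)

/-- The `n = 3` case with `x₁ < y₁ < y₂ < x₂ < x₃ < y₃` (Case 1): then `m₁(y) < m₁(x)` or
`m₃(y) < m₃(x)`, and `m₀(x) < m₀(y)` or `m₂(x) < m₂(y)`; intertwining of maxima holds. -/
theorem three_nodes_case1 (ν₁ ν₂ ν₃ : ℝ) (hν₁ : 0 < ν₁) (hν₂ : 0 < ν₂) (hν₃ : 0 < ν₃)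
    (K J : ℝ → EReal) (hK : KernelFun K) (hSC : KStrictConcave K) (hSM : KStrictMonotone K)
    (hJ : NFieldFun 3 J) (hJusc : UpperSemicontinuousOn J (Icc (0:ℝ) 1))
    (x₁ x₂ x₃ y₁ y₂ y₃ : ℝ) (h0 : 0 ≤ x₁) (h1 : x₁ < y₁) (h2 : y₁ < y₂) (h3 : y₂ < x₂)
    (h4 : x₂ < x₃) (h5 : x₃ < y₃) (h6 : y₃ ≤ 1)
    (hxr : regularNodes 3 ![ν₁, ν₂, ν₃] K J ![x₁, x₂, x₃])
    (hyr : regularNodes 3 ![ν₁, ν₂, ν₃] K J ![y₁, y₂, y₃]) :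
    (intMax 3 ![ν₁, ν₂, ν₃] K J ![y₁, y₂, y₃] 1 < intMax 3 ![ν₁, ν₂, ν₃] K J ![x₁, x₂, x₃] 1 ∨
      intMax 3 ![ν₁, ν₂, ν₃] K J ![y₁, y₂, y₃] 3 < intMax 3 ![ν₁, ν₂, ν₃] K J ![x₁, x₂, x₃] 3) ∧
    (intMax 3 ![ν₁, ν₂, ν₃] K J ![x₁, x₂, x₃] 0 < intMax 3 ![ν₁, ν₂, ν₃] K J ![y₁, y₂, y₃] 0 ∨
      intMax 3 ![ν₁, ν₂, ν₃] K J ![x₁, x₂, x₃] 2 < intMax 3 ![ν₁, ν₂, ν₃] K J ![y₁, y₂, y₃] 2) :=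
  three_nodes_case1_general ν₁ ν₂ ν₃ hν₁ hν₂ hν₃ K J hK hSM hJ hJusc x₁ x₂ x₃ y₁ y₂ y₃ h0 h1 h2 h3
    h4 h5 h6 hxr hyr
end
end

section
/- Let n = 3, ν₁,ν₂,ν₃ > 0, K a strictly concave strictly monotone kernel function, J an upper semicontinuous 3-field function, and x, y regular node systems with x₁ < y₁, x₂ < y₂ < y₃ < x₃ and ν₁(y₁-x₁) ≥ ν₃(x₃-y₃). Then m₂(x) > m₂(y) and m₀(x) < m₀(y); in particular intertwining of maxima holds for x and y. -/
open Set

noncomputable section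

/-! ### Auxiliary lemmas -/

open Filter Topology

section Aux

lemma aux_coe_mul_ne_top {c : ℝ} (hc : 0 < c) {v : EReal} (hv : v ≠ ⊤) :
    (c : EReal) * v ≠ ⊤ := by
  induction v with
  | bot => rw [EReal.coe_mul_bot_of_pos hc]; exact bot_ne_top
  | coe r => rw [← EReal.coe_mul]; exact EReal.coe_ne_top _
  | top => exact absurd rfl hv

lemma aux_ne_bot_of_mul_ne_bot {c : ℝ} (hc : 0 < c) {v : EReal}
    (h : (c : EReal) * v ≠ ⊥) : v ≠ ⊥ := by
  intro hv; rw [hv, EReal.coe_mul_bot_of_pos hc] at h; exact h rfl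

lemma aux_continuous_constMul {c : ℝ} (hc : 0 < c) :
    Continuous fun x : EReal => (c : EReal) * x := by
  rw [continuous_iff_continuousAt]
  intro x
  have h0 : ((c : EReal)) ≠ 0 := EReal.coe_ne_zero.2 hc.ne'
  have := EReal.continuousAt_mul (p := ((c : EReal), x)) (Or.inl h0) (Or.inl h0)
    (Or.inl (EReal.coe_ne_bot c)) (Or.inl (EReal.coe_ne_top c))
  exact this.comp (Continuous.continuousAt (continuous_const.prodMk continuous_id))

/-- An upper semicontinuous `EReal`-valued function attains its maximum on a nonempty
compact set. -/
lemma aux_usc_exists_max {f : ℝ → EReal} {C : Set ℝ} (hC : IsCompact C) (hne : C.Nonempty)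
    (hf : UpperSemicontinuousOn f C) : ∃ t ∈ C, ∀ s ∈ C, f s ≤ f t := by
  by_cases hbot : ∀ s ∈ C, f s = ⊥
  · obtain ⟨t, ht⟩ := hne
    exact ⟨t, ht, fun s hs => by rw [hbot s hs]; exact bot_le⟩
  push_neg at hbot
  obtain ⟨s₀, hs₀C, hs₀⟩ := hbot
  set S := sSup (f '' C) with hS
  have hSbot : (⊥ : EReal) < S := lt_of_lt_of_le (Ne.bot_lt hs₀) (le_sSup ⟨s₀, hs₀C, rfl⟩)
  obtain ⟨u, hu_mono, hu_mem, hu_tend⟩ := exists_seq_strictMono_tendsto' hSbot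
  set A : ℕ → Set ℝ := fun n => {t ∈ C | u n ≤ f t} with hA
  have hAsub : ∀ n, A n ⊆ C := fun n t ht => ht.1
  have hclosed : ∀ n, IsClosed (A n) := by
    intro n
    apply isClosed_of_closure_subset
    intro z hz
    have hzC : z ∈ C := hC.isClosed.closure_subset_iff.2 (hAsub n) hz
    refine ⟨hzC, ?_⟩
    by_contra hlt
    push_neg at hlt
    have hev : ∀ᶠ w in 𝓝[C] z, f w < u n := hf z hzC (u n) hlt
    have hne2 : (𝓝[A n] z).NeBot := mem_closure_iff_nhdsWithin_neBot.1 hz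
    have hev2 : ∀ᶠ w in 𝓝[A n] z, f w < u n :=
      hev.filter_mono (nhdsWithin_mono z (hAsub n))
    obtain ⟨w, hw1, hw2⟩ := (hev2.and eventually_mem_nhdsWithin).exists
    exact absurd hw2.2 (not_le.2 hw1)
  have hnonempty : ∀ n, (A n).Nonempty := by
    intro n
    obtain ⟨v, ⟨t, htC, rfl⟩, hv⟩ := lt_sSup_iff.1 (hu_mem n).2
    exact ⟨t, htC, hv.le⟩
  have hdec : ∀ n, A (n + 1) ⊆ A n := fun n t ht =>
    ⟨ht.1, le_trans (hu_mono.monotone (Nat.le_succ n)) ht.2⟩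
  have hcomp : IsCompact (A 0) := hC.of_isClosed_subset (hclosed 0) (hAsub 0)
  obtain ⟨t, ht⟩ := IsCompact.nonempty_iInter_of_sequence_nonempty_isCompact_isClosed
    A hdec hnonempty hcomp hclosed
  have htmem : ∀ n, t ∈ A n := Set.mem_iInter.1 ht
  have htC : t ∈ C := (htmem 0).1
  have hft : S ≤ f t := le_of_tendsto hu_tend (Eventually.of_forall fun n => (htmem n).2)
  exact ⟨t, htC, fun s hs => le_trans (le_sSup (Set.mem_image_of_mem f hs) : f s ≤ S) hft⟩

variable {K : ℝ → EReal}

/-- Strict decrease of `K` on `[-1, 0]`. -/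
lemma aux_K_lt_neg (hK : KernelFun K) (hSM : KStrictMonotone K) {u v : ℝ}
    (hu : -1 ≤ u) (huv : u < v) (hv : v ≤ 0) : K v < K u := by
  rcases lt_or_eq_of_le hv with hv0 | hv0
  · exact hSM.1 ⟨hu, huv.trans hv0⟩ ⟨(hu.trans huv.le), hv0⟩ huv
  · subst hv0
    have hu0 : u < 0 := huv
    set w : ℝ := u / 2 with hw
    have hw1 : u < w := by rw [hw]; linarith
    have hw2 : w < 0 := by rw [hw]; linarith
    have hw3 : -1 ≤ w := by rw [hw]; linarith
    have h1 : K w < K u := hSM.1 ⟨hu, hu0⟩ ⟨hw3, hw2⟩ hw1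
    have h2 : K 0 ≤ K w := by
      have hKc : Tendsto K (𝓝[Set.Icc (-1:ℝ) 0] 0) (𝓝 (K 0)) :=
        hK.2.2.2.2.1 0 ⟨by norm_num, le_refl 0⟩
      have hsub : Set.Ioo w 0 ⊆ Set.Icc (-1:ℝ) 0 :=
        fun s hs => ⟨hw3.trans hs.1.le, hs.2.le⟩
      have hne : (𝓝[Set.Ioo w 0] (0:ℝ)).NeBot := by
        rw [← mem_closure_iff_nhdsWithin_neBot, closure_Ioo hw2.ne]
        exact ⟨hw2.le, le_refl 0⟩
      refine le_of_tendsto (hKc.mono_left (nhdsWithin_mono _ hsub)) ?_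
      filter_upwards [eventually_mem_nhdsWithin] with s hs
      exact (hSM.1 ⟨hw3, hw2⟩ ⟨hw3.trans hs.1.le, hs.2⟩ hs.1).le
    exact h2.trans_lt h1

/-- Strict increase of `K` on `[0, 1]`. -/
lemma aux_K_lt_pos (hK : KernelFun K) (hSM : KStrictMonotone K) {u v : ℝ}
    (hu : 0 ≤ u) (huv : u < v) (hv : v ≤ 1) : K u < K v := by
  rcases lt_or_eq_of_le hu with hu0 | hu0
  · exact hSM.2 ⟨hu0, (huv.le).trans hv⟩ ⟨hu0.trans huv, hv⟩ huv
  · rw [← hu0]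
    have hv0 : 0 < v := hu0 ▸ huv
    set w : ℝ := v / 2 with hw
    have hw1 : w < v := by rw [hw]; linarith
    have hw2 : 0 < w := by rw [hw]; linarith
    have hw3 : w ≤ 1 := by rw [hw]; linarith
    have h1 : K w < K v := hSM.2 ⟨hw2, hw3⟩ ⟨hv0, hv⟩ hw1
    have h2 : K 0 ≤ K w := by
      have hKc : Tendsto K (𝓝[Set.Icc (0:ℝ) 1] 0) (𝓝 (K 0)) :=
        hK.2.2.2.2.2 0 ⟨le_refl 0, by norm_num⟩
      have hsub : Set.Ioo (0:ℝ) w ⊆ Set.Icc (0:ℝ) 1 :=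
        fun s hs => ⟨hs.1.le, (hs.2.le).trans hw3⟩
      have hne : (𝓝[Set.Ioo (0:ℝ) w] (0:ℝ)).NeBot := by
        rw [← mem_closure_iff_nhdsWithin_neBot, closure_Ioo hw2.ne]
        exact ⟨le_refl 0, hw2.le⟩
      refine le_of_tendsto (hKc.mono_left (nhdsWithin_mono _ hsub)) ?_
      filter_upwards [eventually_mem_nhdsWithin] with s hs
      exact (hSM.2 ⟨hs.1, hs.2.le.trans hw3⟩ ⟨hw2, hw3⟩ hs.2).le
    exact h2.trans_lt h1

/-- Real-valued continuity of `toReal ∘ K` within `[-1,0]` at a point of finiteness. -/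
lemma aux_tendsto_toRealK (hK : KernelFun K) {p : ℝ} (hp : p ∈ Set.Icc (-1:ℝ) 0)
    (hb : K p ≠ ⊥) {l : Filter ℝ} (hl : l ≤ 𝓝[Set.Icc (-1:ℝ) 0] p) :
    Tendsto (fun s => (K s).toReal) l (𝓝 ((K p).toReal)) :=
  (EReal.tendsto_toReal (hK.1 p) hb).comp ((hK.2.2.2.2.1 p hp).mono_left hl)

/-- Concavity slope comparison over `[-1,0]` with possibly-boundary outer endpoints. -/
lemma aux_slope (hK : KernelFun K)
    {a b c d : ℝ} (ha : -1 ≤ a) (hab : a < b) (hb0 : b < 0) (hbc : b ≤ c) (hc1 : -1 < c)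
    (hcd : c < d) (hd : d ≤ 0) (hKa : K a ≠ ⊥) (hKd : K d ≠ ⊥) :
    ((K d).toReal - (K c).toReal) / (d - c) ≤ ((K b).toReal - (K a).toReal) / (b - a) := by
  have hC : ConcaveOn ℝ (Set.Ioo (-1:ℝ) 0) (fun t => (K t).toReal) := hK.2.2.1
  set k : ℝ → ℝ := fun s => (K s).toReal with hk
  have hbm : b ∈ Set.Ioo (-1:ℝ) 0 := ⟨ha.trans_lt hab, hb0⟩
  have hcm : c ∈ Set.Ioo (-1:ℝ) 0 := ⟨hc1, hcd.trans_le hd⟩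
  have key : ∀ a' ∈ Set.Ioo a b, ∀ d' ∈ Set.Ioo c d,
      (k d' - k c) / (d' - c) ≤ (k b - k a') / (b - a') := by
    intro a' ha' d' hd'
    have ha'm : a' ∈ Set.Ioo (-1:ℝ) 0 := ⟨ha.trans_lt ha'.1, ha'.2.trans hb0⟩
    have hd'm : d' ∈ Set.Ioo (-1:ℝ) 0 := ⟨hc1.trans hd'.1, hd'.2.trans_le hd⟩
    rcases eq_or_lt_of_le hbc with hbc' | hbc'
    · subst hbc'
      exact hC.slope_anti_adjacent ha'm hd'm ha'.2 hd'.1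
    · calc (k d' - k c) / (d' - c) ≤ (k c - k b) / (c - b) :=
            hC.slope_anti_adjacent hbm hd'm hbc' hd'.1
        _ ≤ (k b - k a') / (b - a') := hC.slope_anti_adjacent ha'm hcm ha'.2 hbc'
  have step1 : ∀ a' ∈ Set.Ioo a b, (k d - k c) / (d - c) ≤ (k b - k a') / (b - a') := by
    intro a' ha'
    have hsub : Set.Ioo c d ⊆ Set.Icc (-1:ℝ) 0 :=
      fun s hs => ⟨(hc1.trans hs.1).le, hs.2.le.trans hd⟩
    have hne : (𝓝[Set.Ioo c d] d).NeBot := by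
      rw [← mem_closure_iff_nhdsWithin_neBot, closure_Ioo hcd.ne]
      exact ⟨hcd.le, le_refl d⟩
    have hkd : Tendsto k (𝓝[Set.Ioo c d] d) (𝓝 (k d)) :=
      aux_tendsto_toRealK hK ⟨(hc1.trans hcd).le, hd⟩ hKd (nhdsWithin_mono _ hsub)
    have hden : Tendsto (fun d' : ℝ => d' - c) (𝓝[Set.Ioo c d] d) (𝓝 (d - c)) :=
      ((continuous_sub_right c).tendsto d).mono_left nhdsWithin_le_nhds
    have htend : Tendsto (fun d' => (k d' - k c) / (d' - c)) (𝓝[Set.Ioo c d] d)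
        (𝓝 ((k d - k c) / (d - c))) :=
      (hkd.sub tendsto_const_nhds).div hden (sub_ne_zero.2 hcd.ne')
    refine le_of_tendsto htend ?_
    filter_upwards [eventually_mem_nhdsWithin] with d' hd'
    exact key a' ha' d' hd'
  have hsub2 : Set.Ioo a b ⊆ Set.Icc (-1:ℝ) 0 :=
    fun s hs => ⟨ha.trans hs.1.le, (hs.2.trans hb0).le⟩
  have hne2 : (𝓝[Set.Ioo a b] a).NeBot := by
    rw [← mem_closure_iff_nhdsWithin_neBot, closure_Ioo hab.ne]
    exact ⟨le_refl a, hab.le⟩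
  have hka : Tendsto k (𝓝[Set.Ioo a b] a) (𝓝 (k a)) :=
    aux_tendsto_toRealK hK ⟨ha, hab.le.trans hb0.le⟩ hKa (nhdsWithin_mono _ hsub2)
  have hden2 : Tendsto (fun a' : ℝ => b - a') (𝓝[Set.Ioo a b] a) (𝓝 (b - a)) :=
    ((continuous_sub_left b).tendsto a).mono_left nhdsWithin_le_nhds
  have htend2 : Tendsto (fun a' => (k b - k a') / (b - a')) (𝓝[Set.Ioo a b] a)
      (𝓝 ((k b - k a) / (b - a))) :=
    (tendsto_const_nhds.sub hka).div hden2 (sub_ne_zero.2 hab.ne')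
  refine ge_of_tendsto htend2 ?_
  filter_upwards [eventually_mem_nhdsWithin] with a' ha'
  exact step1 a' ha'

/-- Upper semicontinuity of the sum of translates on a suitable interval. -/
lemma aux_sumTrans_usc (hK : KernelFun K) {J : ℝ → EReal} (hJtop : ∀ t, J t ≠ ⊤)
    (hJusc : UpperSemicontinuousOn J (Set.Icc (0:ℝ) 1)) (ν : Fin 3 → ℝ) (hν : ∀ i, 0 < ν i)
    (z : Fin 3 → ℝ) {I : Set ℝ} (hI : I ⊆ Set.Icc (0:ℝ) 1)
    (hside : ∀ i, (∀ t ∈ I, t - z i ∈ Set.Icc (-1:ℝ) 0) ∨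
      (∀ t ∈ I, t - z i ∈ Set.Icc (0:ℝ) 1)) :
    UpperSemicontinuousOn (sumTrans 3 ν K J z) I := by
  set g : Fin 3 → ℝ → EReal := fun i t => ((ν i : ℝ) : EReal) * K (t - z i) with hg
  have hgtop : ∀ i t, g i t ≠ ⊤ := fun i t => aux_coe_mul_ne_top (hν i) (hK.1 _)
  have hgusc : ∀ i, UpperSemicontinuousOn (g i) I := by
    intro i
    have hKc : ContinuousOn (fun t => K (t - z i)) I := by
      rcases hside i with h | h
      · exact (hK.2.2.2.2.1).comp ((continuous_sub_right (z i)).continuousOn) h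
      · exact (hK.2.2.2.2.2).comp ((continuous_sub_right (z i)).continuousOn) h
    exact ((aux_continuous_constMul (hν i)).comp_continuousOn hKc).upperSemicontinuousOn
  have h01 : UpperSemicontinuousOn (fun t => g 0 t + g 1 t) I :=
    (hgusc 0).add' (hgusc 1) (fun t _ =>
      EReal.continuousAt_add (Or.inl (hgtop 0 t)) (Or.inr (hgtop 1 t)))
  have h012 : UpperSemicontinuousOn (fun t => g 0 t + g 1 t + g 2 t) I :=
    h01.add' (hgusc 2) (fun t _ =>
      EReal.continuousAt_add (Or.inl (EReal.add_lt_top (hgtop 0 t) (hgtop 1 t)).ne)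
      (Or.inr (hgtop 2 t)))
  have hfinal : UpperSemicontinuousOn (fun t => J t + (g 0 t + g 1 t + g 2 t)) I :=
    (hJusc.mono hI).add' h012 (fun t _ =>
      EReal.continuousAt_add (Or.inl (hJtop t))
      (Or.inr (EReal.add_lt_top (EReal.add_lt_top (hgtop 0 t) (hgtop 1 t)).ne
        (hgtop 2 t)).ne))
  have hEq : sumTrans 3 ν K J z = fun t => J t + (g 0 t + g 1 t + g 2 t) := by
    funext t
    simp [sumTrans, Fin.sum_univ_three, hg]
  rw [hEq]
  exact hfinal

end Aux

/-- The `n = 3` case with `x₁ < y₁`, `x₂ < y₂ < y₃ < x₃` and `ν₁(y₁-x₁) ≥ ν₃(x₃-y₃)`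
(Case 2.1): then `m₂(x) > m₂(y)` and `m₀(x) < m₀(y)`; intertwining of maxima holds. -/
theorem three_nodes_case21 (ν₁ ν₂ ν₃ : ℝ) (hν₁ : 0 < ν₁) (hν₂ : 0 < ν₂) (hν₃ : 0 < ν₃)
    (K J : ℝ → EReal) (hK : KernelFun K) (hSC : KStrictConcave K) (hSM : KStrictMonotone K)
    (hJ : NFieldFun 3 J) (hJusc : UpperSemicontinuousOn J (Icc (0:ℝ) 1))
    (x₁ x₂ x₃ y₁ y₂ y₃ : ℝ)
    (hxs : closedSimplex 3 ![x₁, x₂, x₃]) (hys : closedSimplex 3 ![y₁, y₂, y₃])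
    (h1 : x₁ < y₁) (h2 : x₂ < y₂) (h3 : y₂ < y₃) (h4 : y₃ < x₃)
    (hw : ν₃ * (x₃ - y₃) ≤ ν₁ * (y₁ - x₁))
    (hxr : regularNodes 3 ![ν₁, ν₂, ν₃] K J ![x₁, x₂, x₃])
    (hyr : regularNodes 3 ![ν₁, ν₂, ν₃] K J ![y₁, y₂, y₃]) :
    intMax 3 ![ν₁, ν₂, ν₃] K J ![y₁, y₂, y₃] 2 < intMax 3 ![ν₁, ν₂, ν₃] K J ![x₁, x₂, x₃] 2 ∧
      intMax 3 ![ν₁, ν₂, ν₃] K J ![x₁, x₂, x₃] 0 < intMax 3 ![ν₁, ν₂, ν₃] K J ![y₁, y₂, y₃] 0 := by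
  classical
  -- order facts from the simplices
  have hx01 : (0:ℝ) ≤ x₁ := by simpa using (hxs.1 0).1
  have hx12 : x₁ ≤ x₂ := by simpa using hxs.2 (show (0:Fin 3) ≤ 1 by decide)
  have hx23 : x₂ ≤ x₃ := by simpa using hxs.2 (show (1:Fin 3) ≤ 2 by decide)
  have hx31 : x₃ ≤ 1 := by simpa using (hxs.1 2).2
  have hy01 : (0:ℝ) ≤ y₁ := by simpa using (hys.1 0).1
  have hy12 : y₁ ≤ y₂ := by simpa using hys.2 (show (0:Fin 3) ≤ 1 by decide)
  have hy31 : y₃ ≤ 1 := by simpa using (hys.1 2).2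
  have hνpos : ∀ i : Fin 3, 0 < (![ν₁, ν₂, ν₃] : Fin 3 → ℝ) i := by
    intro i; fin_cases i <;> simpa
  set Fx : ℝ → EReal := sumTrans 3 ![ν₁, ν₂, ν₃] K J ![x₁, x₂, x₃] with hFxd
  set Fy : ℝ → EReal := sumTrans 3 ![ν₁, ν₂, ν₃] K J ![y₁, y₂, y₃] with hFyd
  have e2y : intMax 3 ![ν₁, ν₂, ν₃] K J ![y₁, y₂, y₃] 2 = sSup (Fy '' Icc y₂ y₃) := by
    rw [hFyd]; rfl
  have e2x : intMax 3 ![ν₁, ν₂, ν₃] K J ![x₁, x₂, x₃] 2 = sSup (Fx '' Icc x₂ x₃) := by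
    rw [hFxd]; rfl
  have e0x : intMax 3 ![ν₁, ν₂, ν₃] K J ![x₁, x₂, x₃] 0 = sSup (Fx '' Icc 0 x₁) := by
    rw [hFxd]; rfl
  have e0y : intMax 3 ![ν₁, ν₂, ν₃] K J ![y₁, y₂, y₃] 0 = sSup (Fy '' Icc 0 y₁) := by
    rw [hFyd]; rfl
  have hsumx : ∀ t, Fx t = J t +
      ((ν₁ : EReal) * K (t - x₁) + (ν₂ : EReal) * K (t - x₂) + (ν₃ : EReal) * K (t - x₃)) := by
    intro t; rw [hFxd]; simp [sumTrans, Fin.sum_univ_three]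
  have hsumy : ∀ t, Fy t = J t +
      ((ν₁ : EReal) * K (t - y₁) + (ν₂ : EReal) * K (t - y₂) + (ν₃ : EReal) * K (t - y₃)) := by
    intro t; rw [hFyd]; simp [sumTrans, Fin.sum_univ_three]
  constructor
  · -- Part A : m₂(y) < m₂(x)
    have hsubI : Icc y₂ y₃ ⊆ Icc (0:ℝ) 1 := fun s hs => ⟨by linarith [hs.1], by linarith [hs.2]⟩
    have huscy : UpperSemicontinuousOn Fy (Icc y₂ y₃) := by
      rw [hFyd]
      refine aux_sumTrans_usc hK hJ.1 hJusc _ hνpos _ hsubI ?_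
      intro i; fin_cases i
      · exact Or.inr fun t ht =>
          (⟨by linarith [ht.1], by linarith [ht.2]⟩ : t - y₁ ∈ Icc (0:ℝ) 1)
      · exact Or.inr fun t ht =>
          (⟨by linarith [ht.1], by linarith [ht.2]⟩ : t - y₂ ∈ Icc (0:ℝ) 1)
      · exact Or.inl fun t ht =>
          (⟨by linarith [ht.1], by linarith [ht.2]⟩ : t - y₃ ∈ Icc (-1:ℝ) 0)
    obtain ⟨t, htm, htmax⟩ := aux_usc_exists_max isCompact_Icc (nonempty_Icc.2 h3.le) huscy
    obtain ⟨ht1, ht2⟩ := htm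
    have hm2 : sSup (Fy '' Icc y₂ y₃) = Fy t :=
      le_antisymm (sSup_le fun v hv => by obtain ⟨s, hs, rfl⟩ := hv; exact htmax s hs)
        (le_sSup (mem_image_of_mem _ ⟨ht1, ht2⟩))
    have hbotFy : Fy t ≠ ⊥ := by rw [← hm2, ← e2y]; exact hyr 2
    rw [hsumy t] at hbotFy
    simp only [ne_eq, EReal.add_eq_bot_iff, not_or] at hbotFy
    obtain ⟨hJtb, ⟨hA, hB⟩, hC⟩ := hbotFy
    have hK1yb : K (t - y₁) ≠ ⊥ := aux_ne_bot_of_mul_ne_bot hν₁ hA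
    have hK2yb : K (t - y₂) ≠ ⊥ := aux_ne_bot_of_mul_ne_bot hν₂ hB
    have hK3yb : K (t - y₃) ≠ ⊥ := aux_ne_bot_of_mul_ne_bot hν₃ hC
    have i1 : K (t - y₁) < K (t - x₁) :=
      aux_K_lt_pos hK hSM (by linarith) (by linarith) (by linarith)
    have i2 : K (t - y₂) < K (t - x₂) :=
      aux_K_lt_pos hK hSM (by linarith) (by linarith) (by linarith)
    have i3 : K (t - y₃) < K (t - x₃) :=
      aux_K_lt_neg hK hSM (by linarith) (by linarith) (by linarith)
    obtain ⟨rJ, hrJ⟩ : ∃ r : ℝ, J t = (r : EReal) := ⟨_, (EReal.coe_toReal (hJ.1 t) hJtb).symm⟩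
    obtain ⟨a1, ha1⟩ : ∃ r : ℝ, K (t - y₁) = (r : EReal) :=
      ⟨_, (EReal.coe_toReal (hK.1 _) hK1yb).symm⟩
    obtain ⟨a2, ha2⟩ : ∃ r : ℝ, K (t - y₂) = (r : EReal) :=
      ⟨_, (EReal.coe_toReal (hK.1 _) hK2yb).symm⟩
    obtain ⟨a3, ha3⟩ : ∃ r : ℝ, K (t - y₃) = (r : EReal) :=
      ⟨_, (EReal.coe_toReal (hK.1 _) hK3yb).symm⟩
    obtain ⟨b1, hb1⟩ : ∃ r : ℝ, K (t - x₁) = (r : EReal) :=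
      ⟨_, (EReal.coe_toReal (hK.1 _) (((Ne.bot_lt hK1yb).trans_le i1.le).ne')).symm⟩
    obtain ⟨b2, hb2⟩ : ∃ r : ℝ, K (t - x₂) = (r : EReal) :=
      ⟨_, (EReal.coe_toReal (hK.1 _) (((Ne.bot_lt hK2yb).trans_le i2.le).ne')).symm⟩
    obtain ⟨b3, hb3⟩ : ∃ r : ℝ, K (t - x₃) = (r : EReal) :=
      ⟨_, (EReal.coe_toReal (hK.1 _) (((Ne.bot_lt hK3yb).trans_le i3.le).ne')).symm⟩
    rw [ha1, hb1] at i1; rw [ha2, hb2] at i2; rw [ha3, hb3] at i3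
    have r1 : a1 < b1 := by exact_mod_cast i1
    have r2 : a2 < b2 := by exact_mod_cast i2
    have r3 : a3 < b3 := by exact_mod_cast i3
    have hlt : Fy t < Fx t := by
      rw [hsumy t, hsumx t, hrJ, ha1, ha2, ha3, hb1, hb2, hb3]
      have hreal : rJ + (ν₁ * a1 + ν₂ * a2 + ν₃ * a3) < rJ + (ν₁ * b1 + ν₂ * b2 + ν₃ * b3) := by
        have m1 : ν₁ * a1 < ν₁ * b1 := mul_lt_mul_of_pos_left r1 hν₁
        have m2 : ν₂ * a2 < ν₂ * b2 := mul_lt_mul_of_pos_left r2 hν₂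
        have m3 : ν₃ * a3 < ν₃ * b3 := mul_lt_mul_of_pos_left r3 hν₃
        linarith
      exact_mod_cast hreal
    have hle : Fx t ≤ sSup (Fx '' Icc x₂ x₃) :=
      le_sSup (mem_image_of_mem _ ⟨by linarith, by linarith⟩)
    rw [e2y, e2x, hm2]
    exact lt_of_lt_of_le hlt hle
  · -- Part B : m₀(x) < m₀(y)
    have hsubI : Icc (0:ℝ) x₁ ⊆ Icc (0:ℝ) 1 :=
      fun s hs => ⟨hs.1, by linarith [hs.2]⟩
    have huscx : UpperSemicontinuousOn Fx (Icc 0 x₁) := by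
      rw [hFxd]
      refine aux_sumTrans_usc hK hJ.1 hJusc _ hνpos _ hsubI ?_
      intro i; fin_cases i
      · exact Or.inl fun t ht =>
          (⟨by linarith [ht.1], by linarith [ht.2]⟩ : t - x₁ ∈ Icc (-1:ℝ) 0)
      · exact Or.inl fun t ht =>
          (⟨by linarith [ht.1], by linarith [ht.2]⟩ : t - x₂ ∈ Icc (-1:ℝ) 0)
      · exact Or.inl fun t ht =>
          (⟨by linarith [ht.1], by linarith [ht.2]⟩ : t - x₃ ∈ Icc (-1:ℝ) 0)
    obtain ⟨t, htm, htmax⟩ := aux_usc_exists_max isCompact_Icc (nonempty_Icc.2 hx01) huscx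
    obtain ⟨ht1, ht2⟩ := htm
    have hm0 : sSup (Fx '' Icc 0 x₁) = Fx t :=
      le_antisymm (sSup_le fun v hv => by obtain ⟨s, hs, rfl⟩ := hv; exact htmax s hs)
        (le_sSup (mem_image_of_mem _ ⟨ht1, ht2⟩))
    have hbotFx : Fx t ≠ ⊥ := by rw [← hm0, ← e0x]; exact hxr 0
    rw [hsumx t] at hbotFx
    simp only [ne_eq, EReal.add_eq_bot_iff, not_or] at hbotFx
    obtain ⟨hJtb, ⟨hA, hB⟩, hC⟩ := hbotFx
    have hK1xb : K (t - x₁) ≠ ⊥ := aux_ne_bot_of_mul_ne_bot hν₁ hA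
    have hK2xb : K (t - x₂) ≠ ⊥ := aux_ne_bot_of_mul_ne_bot hν₂ hB
    have hK3xb : K (t - x₃) ≠ ⊥ := aux_ne_bot_of_mul_ne_bot hν₃ hC
    -- strict/monotone comparisons on the negative side
    have i1 : K (t - x₁) < K (t - y₁) :=
      aux_K_lt_neg hK hSM (by linarith) (by linarith) (by linarith)
    have i2 : K (t - x₂) < K (t - y₂) :=
      aux_K_lt_neg hK hSM (by linarith) (by linarith) (by linarith)
    have i3 : K (t - y₃) < K (t - x₃) :=
      aux_K_lt_neg hK hSM (by linarith) (by linarith) (by linarith)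
    have hK1yb : K (t - y₁) ≠ ⊥ := ((Ne.bot_lt hK1xb).trans_le i1.le).ne'
    have hK2yb : K (t - y₂) ≠ ⊥ := ((Ne.bot_lt hK2xb).trans_le i2.le).ne'
    have hK3yb : K (t - y₃) ≠ ⊥ := by
      intro hb
      exact (hK.2.1 (t - y₃) (Or.inl ⟨by linarith, by linarith⟩)) hb
    -- the slope inequality
    have hslope := aux_slope hK (a := t - x₃) (b := t - y₃) (c := t - y₁) (d := t - x₁)
      (by linarith) (by linarith) (by linarith) (by linarith) (by linarith)
      (by linarith) (by linarith) hK3xb hK1xb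
    obtain ⟨rJ, hrJ⟩ : ∃ r : ℝ, J t = (r : EReal) := ⟨_, (EReal.coe_toReal (hJ.1 t) hJtb).symm⟩
    obtain ⟨c1, hc1⟩ : ∃ r : ℝ, K (t - x₁) = (r : EReal) :=
      ⟨_, (EReal.coe_toReal (hK.1 _) hK1xb).symm⟩
    obtain ⟨c2, hc2⟩ : ∃ r : ℝ, K (t - x₂) = (r : EReal) :=
      ⟨_, (EReal.coe_toReal (hK.1 _) hK2xb).symm⟩
    obtain ⟨c3, hc3⟩ : ∃ r : ℝ, K (t - x₃) = (r : EReal) :=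
      ⟨_, (EReal.coe_toReal (hK.1 _) hK3xb).symm⟩
    obtain ⟨d1, hd1⟩ : ∃ r : ℝ, K (t - y₁) = (r : EReal) :=
      ⟨_, (EReal.coe_toReal (hK.1 _) hK1yb).symm⟩
    obtain ⟨d2, hd2⟩ : ∃ r : ℝ, K (t - y₂) = (r : EReal) :=
      ⟨_, (EReal.coe_toReal (hK.1 _) hK2yb).symm⟩
    obtain ⟨d3, hd3⟩ : ∃ r : ℝ, K (t - y₃) = (r : EReal) :=
      ⟨_, (EReal.coe_toReal (hK.1 _) hK3yb).symm⟩
    rw [hc1, hd1] at i1; rw [hc2, hd2] at i2; rw [hc3, hd3] at i3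
    have r1 : c1 < d1 := by exact_mod_cast i1
    have r2 : c2 < d2 := by exact_mod_cast i2
    have r3 : d3 < c3 := by exact_mod_cast i3
    rw [hc1, hd1, hc3, hd3] at hslope
    simp only [EReal.toReal_coe] at hslope
    have hslope' : (c1 - d1) / (y₁ - x₁) ≤ (d3 - c3) / (x₃ - y₃) := by
      rw [show t - x₁ - (t - y₁) = y₁ - x₁ by ring, show t - y₃ - (t - x₃) = x₃ - y₃ by ring]
        at hslope
      exact hslope
    have hcross : (c1 - d1) * (x₃ - y₃) ≤ (d3 - c3) * (y₁ - x₁) :=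
      (div_le_div_iff₀ (by linarith) (by linarith)).1 hslope'
    have hkey : ν₃ * (c3 - d3) ≤ ν₁ * (d1 - c1) := by
      nlinarith [mul_le_mul_of_nonneg_left hcross hν₃.le,
        mul_nonneg (by linarith : (0:ℝ) ≤ d1 - c1)
          (by linarith : (0:ℝ) ≤ ν₁ * (y₁ - x₁) - ν₃ * (x₃ - y₃)),
        sub_pos.2 h1]
    have hlt : Fx t < Fy t := by
      rw [hsumy t, hsumx t, hrJ, hc1, hc2, hc3, hd1, hd2, hd3]
      have hreal : rJ + (ν₁ * c1 + ν₂ * c2 + ν₃ * c3) < rJ + (ν₁ * d1 + ν₂ * d2 + ν₃ * d3) := by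
        have m2 : ν₂ * c2 < ν₂ * d2 := mul_lt_mul_of_pos_left r2 hν₂
        nlinarith [hkey]
      exact_mod_cast hreal
    have hle : Fy t ≤ sSup (Fy '' Icc 0 y₁) :=
      le_sSup (mem_image_of_mem _ ⟨ht1, by linarith⟩)
    rw [e0x, e0y, hm0]
    exact lt_of_lt_of_le hlt hle
end
end
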